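/- Let P and Q be real symmetric positive definite n×n matrices, and let λ₁, …, λₙ be the eigenvalues (with multiplicity) of the symmetric positive definite matrix (√P)⁻¹ Q (√P)⁻¹. Then the symmetric Stein divergence satisfies log det((P+Q)/2) − (1/2) log det(P Q) = Σᵢ log((λᵢ^{1/2} + λᵢ^{−1/2})/2). In particular, the Stein divergence is a function of the vector-valued distance d_vv(P,Q) alone. -/

import Mathlib

/-!
With `S = √P` and `A = S⁻¹ Q S⁻¹` one has `P + Q = S (1 + A) S` and `P Q = S² · S A S`, so the
factors `det P` cancel and the divergence equals `log det ((1 + A) / 2) - ½ log det A`. Both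
determinants are products over the eigenvalues `λᵢ > 0` of `A`, and
`(1 + λ) / (2 √λ) = (√λ + 1 / √λ) / 2`.
-/

open Matrix

section OldSqrt

open scoped ComplexOrder

/-- The square root of a positive semidefinite matrix, as `Matrix.PosSemidef.sqrt` was defined
in the older Mathlib (it has since been removed in favour of `CFC.sqrt`). -/
noncomputable def Matrix.PosSemidef.sqrt {n : Type*} [Fintype n] [DecidableEq n] {𝕜 : Type*}
    [RCLike 𝕜] {A : Matrix n n 𝕜} (hA : A.PosSemidef) : Matrix n n 𝕜 :=
  (hA.1.eigenvectorUnitary : Matrix n n 𝕜) *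
    diagonal ((RCLike.ofReal : ℝ → 𝕜) ∘ (√·) ∘ hA.1.eigenvalues) *
    (star hA.1.eigenvectorUnitary : Matrix n n 𝕜)

lemma Matrix.PosSemidef.posSemidef_sqrt {n : Type*} [Fintype n] [DecidableEq n] {𝕜 : Type*}
    [RCLike 𝕜] {A : Matrix n n 𝕜} (hA : A.PosSemidef) : PosSemidef hA.sqrt := by
  unfold Matrix.PosSemidef.sqrt
  have hd : (diagonal ((RCLike.ofReal : ℝ → 𝕜) ∘ (√·) ∘ hA.1.eigenvalues)).PosSemidef := by
    rw [posSemidef_diagonal_iff]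
    intro i
    simp only [Function.comp_apply, RCLike.ofReal_nonneg]
    exact Real.sqrt_nonneg _
  have h := hd.mul_mul_conjTranspose_same (hA.1.eigenvectorUnitary : Matrix n n 𝕜)
  simpa [star_eq_conjTranspose] using h

end OldSqrt

lemma sqrtConj_isHermitian {n : ℕ} {P Q : Matrix (Fin n) (Fin n) ℝ}
    (hP : P.PosDef) (hQ : Q.PosDef) :
    ((hP.posSemidef.sqrt)⁻¹ * Q * (hP.posSemidef.sqrt)⁻¹).IsHermitian := by
  have hs : ((hP.posSemidef.sqrt)⁻¹).IsHermitian :=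
    hP.posSemidef.posSemidef_sqrt.isHermitian.inv
  have hq : Q.IsHermitian := hQ.isHermitian
  simp only [Matrix.IsHermitian, conjTranspose_mul, hs.eq, hq.eq, Matrix.mul_assoc]

namespace Matrix

open scoped ComplexOrder

variable {ι 𝕜 : Type*} [Fintype ι] [DecidableEq ι] [RCLike 𝕜]

lemma det_mul_mul_self {R : Type*} [CommRing R] (S M : Matrix ι ι R) :
    (S * M * S).det = (S * S).det * M.det := by
  simp only [det_mul]
  ring

lemma IsHermitian.det_cfc {A : Matrix ι ι 𝕜} (hA : A.IsHermitian) (f : ℝ → ℝ) :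
    (cfc f A).det = ∏ i, (f (hA.eigenvalues i) : 𝕜) := by
  rw [hA.cfc_eq]
  simp [IsHermitian.cfc, -Unitary.conjStarAlgAut_apply]

lemma IsHermitian.smul_one_add_eq_cfc {A : Matrix ι ι 𝕜} (hA : A.IsHermitian) (c : ℝ) :
    c • (1 + A) = cfc (fun x : ℝ => c * (1 + x)) A := by
  rw [cfc_const_mul c (fun x => 1 + x) A,
    cfc_const_add (1 : ℝ) (fun x : ℝ => x) A (ha := hA.isSelfAdjoint),
    cfc_id' ℝ A hA.isSelfAdjoint, map_one]

lemma PosSemidef.sqrt_eq_cfc {A : Matrix ι ι 𝕜} (hA : A.PosSemidef) :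
    hA.sqrt = cfc Real.sqrt A := by
  rw [hA.1.cfc_eq]
  rfl

lemma PosSemidef.sqrt_mul_self {A : Matrix ι ι 𝕜} (hA : A.PosSemidef) :
    hA.sqrt * hA.sqrt = A := by
  rw [hA.sqrt_eq_cfc, ← cfc_mul Real.sqrt Real.sqrt A]
  calc cfc (fun x => √x * √x) A = cfc id A := by
        refine cfc_congr fun x hx => ?_
        rw [hA.1.spectrum_real_eq_range_eigenvalues] at hx
        obtain ⟨i, rfl⟩ := hx
        exact Real.mul_self_sqrt (hA.eigenvalues_nonneg i)
    _ = A := cfc_id ℝ A hA.1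

lemma PosDef.isUnit_sqrt {P : Matrix ι ι 𝕜} (hP : P.PosDef) : IsUnit hP.posSemidef.sqrt := by
  have h := hP.isUnit
  rw [← hP.posSemidef.sqrt_mul_self, isUnit_iff_isUnit_det, det_mul, IsUnit.mul_iff] at h
  exact (isUnit_iff_isUnit_det _).2 h.1

lemma PosDef.posDef_sqrt_inv_mul_mul_sqrt_inv {P Q : Matrix ι ι 𝕜} (hP : P.PosDef)
    (hQ : Q.PosDef) : ((hP.posSemidef.sqrt)⁻¹ * Q * (hP.posSemidef.sqrt)⁻¹).PosDef := by
  have hS := hP.posSemidef.posSemidef_sqrt.isHermitian.inv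
  have hinj := mulVec_injective_iff_isUnit.2 (isUnit_nonsing_inv_iff.2 hP.isUnit_sqrt)
  simpa only [hS.eq] using hQ.conjTranspose_mul_mul_same hinj

lemma PosDef.sqrt_mul_sqrt_inv_mul_mul_sqrt_inv_mul_sqrt {P : Matrix ι ι 𝕜} (hP : P.PosDef)
    (Q : Matrix ι ι 𝕜) :
    hP.posSemidef.sqrt * ((hP.posSemidef.sqrt)⁻¹ * Q * (hP.posSemidef.sqrt)⁻¹) *
      hP.posSemidef.sqrt = Q := by
  have hS := (isUnit_iff_isUnit_det _).1 hP.isUnit_sqrt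
  simp only [Matrix.mul_assoc, nonsing_inv_mul _ hS, Matrix.mul_one,
    mul_nonsing_inv_cancel_left _ _ hS]

end Matrix

lemma Real.log_sqrt_add_inv_sqrt_div_two {x : ℝ} (hx : 0 < x) :
    Real.log ((√x + (√x)⁻¹) / 2) = Real.log (1 / 2 * (1 + x)) - Real.log x / 2 := by
  have hs : 0 < √x := Real.sqrt_pos.2 hx
  have h : (√x + (√x)⁻¹) / 2 = 1 / 2 * (1 + x) / √x := by
    field_simp
    rw [Real.sq_sqrt hx.le]
    ring
  rw [h, Real.log_div (by positivity) hs.ne', Real.log_sqrt hx.le]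

lemma Real.log_mul_sub_half_log_mul_mul {d a b : ℝ} (hd : 0 < d) (ha : 0 < a) (hb : 0 < b) :
    Real.log (d * a) - 1 / 2 * Real.log (d * (d * b)) = Real.log a - Real.log b / 2 := by
  rw [Real.log_mul hd.ne' ha.ne', Real.log_mul hd.ne' (mul_pos hd hb).ne',
    Real.log_mul hd.ne' hb.ne']
  ring

/-- The symmetric Stein divergence `S(P,Q) = log det ((P+Q)/2) − (1/2) log det (PQ)` is a
function of the vector-valued distance alone: it equals
`Σᵢ log ((λᵢ^{1/2} + λᵢ^{−1/2}) / 2)`, where `λ₁, …, λₙ` are the eigenvalues of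
`(√P)⁻¹ Q (√P)⁻¹`. -/
theorem stein_divergence_eq_fun_of_vvd {n : ℕ}
    (P Q : Matrix (Fin n) (Fin n) ℝ) (hP : P.PosDef) (hQ : Q.PosDef) :
    Real.log (((1 / 2 : ℝ) • (P + Q)).det) - (1 / 2) * Real.log ((P * Q).det)
      = ∑ i, Real.log
          ((Real.sqrt ((sqrtConj_isHermitian hP hQ).eigenvalues i)
            + (Real.sqrt ((sqrtConj_isHermitian hP hQ).eigenvalues i))⁻¹) / 2) := by
  set S := hP.posSemidef.sqrt
  set A := S⁻¹ * Q * S⁻¹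
  have hA : A.IsHermitian := sqrtConj_isHermitian hP hQ
  set μ := hA.eigenvalues
  have hμ : ∀ i, 0 < μ i := (hP.posDef_sqrt_inv_mul_mul_sqrt_inv hQ).eigenvalues_pos
  have hμ_half : ∀ i, 0 < 1 / 2 * (1 + μ i) := fun i => by have := hμ i; positivity
  have hSS : S * S = P := hP.posSemidef.sqrt_mul_self
  have hSAS : S * A * S = Q := hP.sqrt_mul_sqrt_inv_mul_mul_sqrt_inv_mul_sqrt Q
  have hdet_half : ((1 / 2 : ℝ) • (P + Q)).det = P.det * ∏ i, 1 / 2 * (1 + μ i) := by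
    have : (1 / 2 : ℝ) • (P + Q) = S * ((1 / 2 : ℝ) • (1 + A)) * S := by
      rw [← hSS, ← hSAS]
      simp only [Matrix.mul_smul, Matrix.smul_mul, mul_add, add_mul, Matrix.mul_one]
    rw [this, det_mul_mul_self, hSS, hA.smul_one_add_eq_cfc, hA.det_cfc]
    rfl
  have hdet_mul : (P * Q).det = P.det * (P.det * ∏ i, μ i) := by
    rw [← hSAS, det_mul, det_mul_mul_self, hSS, hA.det_eq_prod_eigenvalues]
    rfl
  rw [hdet_half, hdet_mul, Real.log_mul_sub_half_log_mul_mul hP.det_pos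
      (Finset.prod_pos fun i _ => hμ_half i) (Finset.prod_pos fun i _ => hμ i),
    Real.log_prod fun i _ => (hμ_half i).ne', Real.log_prod fun i _ => (hμ i).ne',
    Finset.sum_div, ← Finset.sum_sub_distrib]
  simp only [Real.log_sqrt_add_inv_sqrt_div_two (hμ _)]
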